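/- Let $N \geq 1$, let $f : \mathbb{R}^N \to \mathbb{R}$ be differentiable with $c$-Lipschitz gradient ($c > 0$), and for each $k \in \mathbb{N}$ let $\hat{f}_k : \mathbb{R}^N \to \mathbb{R}$ be differentiable with $c$-Lipschitz gradient, let $D_k \subseteq \mathbb{R}^N$ satisfy $|\hat{f}_k(p) - f(p)| \leq \epsilon_k$ for all $p \in D_k$ and be such that every point of $\mathbb{R}^N$ lies within distance $r_k > 0$ of some point of $D_k$. If $r_k \to 0$ and $\epsilon_k \to 0$ as $k \to \infty$, then $\sup_{x \in \mathbb{R}^N} \|\nabla \hat{f}_k(x) - \nabla f(x)\| \leq 4\sqrt{6r_k^2c^2 + \epsilon_k c} + 10 r_k c \to 0$, i.e., the gradients $\nabla \hat{f}_k$ converge uniformly to $\nabla f$. -/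

import Mathlib

/-!
The difference `g = f̂ₖ - f` has an `L = 2c`-Lipschitz gradient and `|g| ≤ εₖ` on an `rₖ`-net.
Step a distance `t` from `x` along `±∇g x` and replace the two endpoints by nearby net points:
the second-order Taylor bound at `x` gives `t ‖∇g x‖ ≤ ε + L (t + r)² + r ‖∇g x‖`, and the
choice `L (t - r) = √(L ε + 4 L² r²)` turns this into
`‖∇g x‖ ≤ 2 √(L ε + 4 L² r²) + 4 L r`, which is dominated by the stated bound.
-/

open Filter

section
variable {E : Type*} [NormedAddCommGroup E] [InnerProductSpace ℝ E] [CompleteSpace E]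

theorem gradient_sub_of_differentiableAt {f g : E → ℝ} {x : E} (hf : DifferentiableAt ℝ f x)
    (hg : DifferentiableAt ℝ g x) : gradient (f - g) x = gradient f x - gradient g x := by
  simp only [gradient, fderiv_sub hf hg, map_sub]

theorem norm_fderiv_sub_fderiv (h : E → ℝ) (a b : E) :
    ‖fderiv ℝ h a - fderiv ℝ h b‖ = ‖gradient h a - gradient h b‖ := by
  simp only [gradient, ← map_sub, LinearIsometryEquiv.norm_map]

theorem norm_gradient_sub_sub_le {f g : E → ℝ} (hf : Differentiable ℝ f) (hg : Differentiable ℝ g)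
    {L₁ L₂ : ℝ} (hfL : ∀ a b, ‖gradient f a - gradient f b‖ ≤ L₁ * ‖a - b‖)
    (hgL : ∀ a b, ‖gradient g a - gradient g b‖ ≤ L₂ * ‖a - b‖) (a b : E) :
    ‖gradient (f - g) a - gradient (f - g) b‖ ≤ (L₁ + L₂) * ‖a - b‖ := by
  rw [gradient_sub_of_differentiableAt (hf a) (hg a),
    gradient_sub_of_differentiableAt (hf b) (hg b), sub_sub_sub_comm, add_mul]
  exact (norm_sub_le _ _).trans (add_le_add (hfL a b) (hgL a b))

theorem abs_sub_sub_inner_gradient_le {h : E → ℝ} (hd : Differentiable ℝ h) {L : ℝ} (hL : 0 ≤ L)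
    (hlip : ∀ a b, ‖gradient h a - gradient h b‖ ≤ L * ‖a - b‖) (a b : E) :
    |h b - h a - inner ℝ (gradient h a) (b - a)| ≤ L * ‖b - a‖ ^ 2 := by
  rw [inner_gradient_left, ← Real.norm_eq_abs, sq, ← mul_assoc]
  refine (convex_closedBall a ‖b - a‖).norm_image_sub_le_of_norm_hasFDerivWithin_le'
    (fun z _ => (hd z).hasFDerivAt.hasFDerivWithinAt) (fun z hz => ?_)
    (Metric.mem_closedBall_self (norm_nonneg _)) (by simp [dist_eq_norm])
  rw [norm_fderiv_sub_fderiv]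
  exact (hlip z a).trans (mul_le_mul_of_nonneg_left (by simpa [dist_eq_norm] using hz) hL)

variable {g : E → ℝ} {L ε r : ℝ} {D : Set E}

theorem abs_sub_sub_inner_gradient_le_of_norm_sub_le (hd : Differentiable ℝ g) (hL : 0 ≤ L)
    (hlip : ∀ a b, ‖gradient g a - gradient g b‖ ≤ L * ‖a - b‖) {x v p : E}
    (hp : ‖p - (x + v)‖ ≤ r) :
    |g p - g x - inner ℝ (gradient g x) v| ≤ L * (‖v‖ + r) ^ 2 + r * ‖gradient g x‖ := by
  have hpx : ‖p - x‖ ≤ ‖v‖ + r := by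
    calc ‖p - x‖ = ‖v + (p - (x + v))‖ := by congr 1; abel
      _ ≤ ‖v‖ + r := (norm_add_le _ _).trans (by linarith)
  have htaylor : |g p - g x - inner ℝ (gradient g x) (p - x)| ≤ L * (‖v‖ + r) ^ 2 :=
    (abs_sub_sub_inner_gradient_le hd hL hlip x p).trans (by gcongr)
  have hinner : |inner ℝ (gradient g x) (p - x) - inner ℝ (gradient g x) v| ≤
      r * ‖gradient g x‖ := by
    rw [← inner_sub_right, sub_sub, mul_comm]
    exact (abs_real_inner_le_norm _ _).trans (mul_le_mul_of_nonneg_left hp (norm_nonneg _))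
  calc |g p - g x - inner ℝ (gradient g x) v|
      = |(g p - g x - inner ℝ (gradient g x) (p - x))
          + (inner ℝ (gradient g x) (p - x) - inner ℝ (gradient g x) v)| := by congr 1; ring
    _ ≤ L * (‖v‖ + r) ^ 2 + r * ‖gradient g x‖ := (abs_add_le _ _).trans (add_le_add htaylor hinner)

theorem inner_gradient_le_of_abs_le_on_net (hd : Differentiable ℝ g) (hL : 0 ≤ L)
    (hlip : ∀ a b, ‖gradient g a - gradient g b‖ ≤ L * ‖a - b‖)
    (hD : ∀ p ∈ D, |g p| ≤ ε) (hnet : ∀ y, ∃ p ∈ D, ‖y - p‖ ≤ r) (x v : E) :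
    inner ℝ (gradient g x) v ≤ ε + L * (‖v‖ + r) ^ 2 + r * ‖gradient g x‖ := by
  obtain ⟨p, hpD, hp⟩ := hnet (x + v)
  obtain ⟨q, hqD, hq⟩ := hnet (x + -v)
  have hp' := abs_sub_sub_inner_gradient_le_of_norm_sub_le hd hL hlip (norm_sub_rev p _ ▸ hp)
  have hq' := abs_sub_sub_inner_gradient_le_of_norm_sub_le hd hL hlip (norm_sub_rev q _ ▸ hq)
  rw [inner_neg_right, norm_neg] at hq'
  have hgp := hD p hpD
  have hgq := hD q hqD
  rw [abs_le] at hp' hq' hgp hgq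
  linarith [hp'.2, hq'.1, hgp.2, hgq.1]

theorem norm_gradient_le_of_abs_le_on_net (hd : Differentiable ℝ g) (hL : 0 < L) (hε : 0 ≤ ε)
    (hr : 0 < r) (hlip : ∀ a b, ‖gradient g a - gradient g b‖ ≤ L * ‖a - b‖)
    (hD : ∀ p ∈ D, |g p| ≤ ε) (hnet : ∀ y, ∃ p ∈ D, ‖y - p‖ ≤ r) (x : E) :
    ‖gradient g x‖ ≤ 2 * √(L * ε + 4 * L ^ 2 * r ^ 2) + 4 * L * r := by
  set w := gradient g x
  rcases eq_or_ne w 0 with hw | hw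
  · rw [hw, norm_zero]; positivity
  have hw' : 0 < ‖w‖ := norm_pos_iff.2 hw
  set S := √(L * ε + 4 * L ^ 2 * r ^ 2)
  have hS : 0 < S := Real.sqrt_pos.2 (by positivity)
  have hS2 : S ^ 2 = L * ε + 4 * L ^ 2 * r ^ 2 := Real.sq_sqrt (by positivity)
  set t := S / L + r
  have hLt : L * t = S + L * r := by simp only [t]; field_simp
  have key : t * ‖w‖ ≤ ε + L * (t + r) ^ 2 + r * ‖w‖ := by
    have h := inner_gradient_le_of_abs_le_on_net hd hL.le hlip hD hnet x ((t / ‖w‖) • w)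
    have ht : 0 ≤ t / ‖w‖ := by positivity
    rwa [real_inner_smul_right, real_inner_self_eq_norm_sq, norm_smul, Real.norm_of_nonneg ht,
      div_mul_cancel₀ _ hw'.ne', sq, ← mul_assoc, div_mul_cancel₀ _ hw'.ne'] at h
  have hkey := mul_le_mul_of_nonneg_left key hL.le
  have : S * ‖w‖ ≤ S * (2 * S + 4 * L * r) := by
    linear_combination hkey + (-‖w‖ + L * t + S + 3 * L * r) * hLt - hS2
  exact le_of_mul_le_mul_left this hS
end

theorem tendstoUniformly_of_norm_sub_le {ι α β : Type*} [SeminormedAddCommGroup β] {l : Filter ι}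
    {F : ι → α → β} {f : α → β} {b : ι → ℝ} (h : ∀ k x, ‖F k x - f x‖ ≤ b k)
    (hb : Tendsto b l (nhds 0)) : TendstoUniformly F f l := by
  rw [Metric.tendstoUniformly_iff]
  intro δ hδ
  filter_upwards [hb.eventually_lt_const hδ] with k hk x
  rw [dist_comm, dist_eq_norm]
  exact (h k x).trans_lt hk

theorem stmt_6_general (N : ℕ)
    (f : EuclideanSpace ℝ (Fin N) → ℝ) (hf : Differentiable ℝ f)
    (c : ℝ) (hc : 0 < c)
    (hflip : ∀ a b, ‖gradient f a - gradient f b‖ ≤ c * ‖a - b‖)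
    (fhat : ℕ → EuclideanSpace ℝ (Fin N) → ℝ)
    (hfhat : ∀ k, Differentiable ℝ (fhat k))
    (hfhatlip : ∀ k, ∀ a b, ‖gradient (fhat k) a - gradient (fhat k) b‖ ≤ c * ‖a - b‖)
    (D : ℕ → Set (EuclideanSpace ℝ (Fin N)))
    (ε : ℕ → ℝ) (hε : ∀ k, 0 ≤ ε k) (r : ℕ → ℝ) (hr : ∀ k, 0 < r k)
    (hD : ∀ k, ∀ p ∈ D k, |fhat k p - f p| ≤ ε k)
    (hfill : ∀ k, ∀ x : EuclideanSpace ℝ (Fin N), ∃ p ∈ D k, ‖x - p‖ ≤ r k)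
    (hrlim : Tendsto r atTop (nhds 0)) (hεlim : Tendsto ε atTop (nhds 0)) :
    (∀ k, ∀ x : EuclideanSpace ℝ (Fin N),
        ‖gradient (fhat k) x - gradient f x‖ ≤
          4 * Real.sqrt (6 * (r k) ^ 2 * c ^ 2 + ε k * c) + 10 * r k * c) ∧
      Tendsto (fun k => 4 * Real.sqrt (6 * (r k) ^ 2 * c ^ 2 + ε k * c) + 10 * r k * c)
        atTop (nhds 0) ∧
      TendstoUniformly (fun k => gradient (fhat k)) (gradient f) atTop := by
  have hbound : ∀ k x, ‖gradient (fhat k) x - gradient f x‖ ≤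
      4 * √(6 * (r k) ^ 2 * c ^ 2 + ε k * c) + 10 * r k * c := by
    intro k x
    have h := norm_gradient_le_of_abs_le_on_net ((hfhat k).sub hf) (by positivity) (hε k) (hr k)
      (norm_gradient_sub_sub_le (hfhat k) hf (hfhatlip k) hflip) (hD k) (hfill k) x
    rw [gradient_sub_of_differentiableAt (hfhat k x) (hf x)] at h
    have hsqrt : √((c + c) * ε k + 4 * (c + c) ^ 2 * r k ^ 2) ≤
        2 * √(6 * r k ^ 2 * c ^ 2 + ε k * c) := by
      rw [Real.sqrt_le_left (by positivity), mul_pow,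
        Real.sq_sqrt (add_nonneg (by positivity) (mul_nonneg (hε k) hc.le))]
      nlinarith [mul_nonneg (hε k) hc.le]
    linarith [mul_pos (hr k) hc]
  have hlim : Tendsto (fun k => 4 * √(6 * (r k) ^ 2 * c ^ 2 + ε k * c) + 10 * r k * c)
      atTop (nhds 0) := by
    have hcont : Continuous fun p : ℝ × ℝ =>
        4 * √(6 * p.1 ^ 2 * c ^ 2 + p.2 * c) + 10 * p.1 * c := by
      fun_prop
    simpa [Function.comp_def] using (hcont.tendsto (0, 0)).comp (hrlim.prodMk_nhds hεlim)
  exact ⟨hbound, hlim, tendstoUniformly_of_norm_sub_le hbound hlim⟩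

/-- As data density increases (`rₖ → 0`) and training error decreases (`εₖ → 0`), the
gradients of the learned models `f̂ₖ` converge uniformly to the gradient of the true
function `f`, with the explicit bound
`‖∇f̂ₖ(x) - ∇f(x)‖ ≤ 4√(6rₖ²c² + εₖc) + 10rₖc → 0`. -/
theorem stmt_6 (N : ℕ) (hN : 1 ≤ N)
    (f : EuclideanSpace ℝ (Fin N) → ℝ) (hf : Differentiable ℝ f)
    (c : ℝ) (hc : 0 < c)
    (hflip : ∀ a b, ‖gradient f a - gradient f b‖ ≤ c * ‖a - b‖)
    (fhat : ℕ → EuclideanSpace ℝ (Fin N) → ℝ)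
    (hfhat : ∀ k, Differentiable ℝ (fhat k))
    (hfhatlip : ∀ k, ∀ a b, ‖gradient (fhat k) a - gradient (fhat k) b‖ ≤ c * ‖a - b‖)
    (D : ℕ → Set (EuclideanSpace ℝ (Fin N)))
    (ε : ℕ → ℝ) (hε : ∀ k, 0 ≤ ε k) (r : ℕ → ℝ) (hr : ∀ k, 0 < r k)
    (hD : ∀ k, ∀ p ∈ D k, |fhat k p - f p| ≤ ε k)
    (hfill : ∀ k, ∀ x : EuclideanSpace ℝ (Fin N), ∃ p ∈ D k, ‖x - p‖ ≤ r k)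
    (hrlim : Tendsto r atTop (nhds 0)) (hεlim : Tendsto ε atTop (nhds 0)) :
    (∀ k, ∀ x : EuclideanSpace ℝ (Fin N),
        ‖gradient (fhat k) x - gradient f x‖ ≤
          4 * Real.sqrt (6 * (r k) ^ 2 * c ^ 2 + ε k * c) + 10 * r k * c) ∧
      Tendsto (fun k => 4 * Real.sqrt (6 * (r k) ^ 2 * c ^ 2 + ε k * c) + 10 * r k * c)
        atTop (nhds 0) ∧
      TendstoUniformly (fun k => gradient (fhat k)) (gradient f) atTop :=
  stmt_6_general N f hf c hc hflip fhat hfhat hfhatlip D ε hε r hr hD hfill hrlim hεlim
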